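/- Let E be a finite-dimensional real inner product space, let p ≥ 2 and a > 0 be real numbers, and set b = a/p. Let β : E → ℝ be a twice continuously differentiable function with ‖∇β(x)‖ = 1 for every x ∈ E and Δβ(x) ≥ -a for every x ∈ E. Then the function g = e^{bβ} satisfies the pointwise differential inequality Δ_p g (x) ≥ - b^p · g(x)^{p-1} for every x ∈ E. -/

import Mathlib

open Real RealInnerProductSpace

/-- The divergence of a vector field `X : E → E` at `x`: the trace of its Fréchet
derivative at `x`. -/
noncomputable def vectorDiv {E : Type*} [NormedAddCommGroup E] [InnerProductSpace ℝ E]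
    (X : E → E) (x : E) : ℝ :=
  LinearMap.trace ℝ E (fderiv ℝ X x : E →ₗ[ℝ] E)

/-- The `p`-Laplacian `Δ_p u = div(‖∇u‖^{p-2} ∇u)`. -/
noncomputable def pLaplacian {E : Type*} [NormedAddCommGroup E] [InnerProductSpace ℝ E]
    [CompleteSpace E] (p : ℝ) (u : E → ℝ) : E → ℝ :=
  vectorDiv (fun x => ‖gradient u x‖ ^ (p - 2) • gradient u x)

/-- The Laplacian `Δu = div(∇u)`. -/
noncomputable def laplacian {E : Type*} [NormedAddCommGroup E] [InnerProductSpace ℝ E]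
    [CompleteSpace E] (u : E → ℝ) : E → ℝ :=
  vectorDiv (gradient u)

/-!
Writing `g = exp (b β)`, the eikonal equation `‖∇β‖ = 1` gives `‖∇g‖ = b g`, so the
`p`-flux is `‖∇g‖^{p-2} ∇g = ψ(β) ∇β` with `ψ t = b^{p-1} e^{(p-1) b t}`. Its divergence is
`ψ'(β) ‖∇β‖² + ψ(β) Δβ = ψ(β) ((p-1) b + Δβ) ≥ ψ(β) ((p-1) b - a) = -b ψ(β)`, because `a = p b`,
and `b ψ(β) = b^p g^{p-1}`.
-/

open InnerProductSpace
open scoped Gradient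

section Gradient

variable {E : Type*} [NormedAddCommGroup E] [InnerProductSpace ℝ E] [CompleteSpace E]

theorem HasDerivAt.comp_hasGradientAt {φ : ℝ → ℝ} {d : ℝ} {f : E → ℝ} {G x : E}
    (hφ : HasDerivAt φ d (f x)) (hf : HasGradientAt f G x) :
    HasGradientAt (fun y => φ (f y)) (d • G) x := by
  rw [hasGradientAt_iff_hasFDerivAt, map_smulₛₗ]
  exact hφ.comp_hasFDerivAt x hf.hasFDerivAt

theorem ContDiff.gradient {n : WithTop ℕ∞} {f : E → ℝ} (hf : ContDiff ℝ (n + 1) f) :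
    ContDiff ℝ n (∇ f) :=
  (toDual ℝ E).symm.toContinuousLinearEquiv.contDiff.comp (hf.fderiv_right le_rfl)

end Gradient

section Divergence

variable {E : Type*} [NormedAddCommGroup E] [InnerProductSpace ℝ E] [FiniteDimensional ℝ E]

theorem vectorDiv_smul {f : E → ℝ} {X : E → E} {x : E}
    (hf : DifferentiableAt ℝ f x) (hX : DifferentiableAt ℝ X x) :
    vectorDiv (fun y => f y • X y) x = ⟪∇ f x, X x⟫_ℝ + f x * vectorDiv X x := by
  rw [vectorDiv, fderiv_fun_smul hf hX, ← toDual_gradient]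
  simp [vectorDiv, add_comm]

theorem vectorDiv_comp_smul_gradient {ψ : ℝ → ℝ} {d : ℝ} {β : E → ℝ} {x : E}
    (hψ : HasDerivAt ψ d (β x)) (hβ : DifferentiableAt ℝ β x)
    (hβ' : DifferentiableAt ℝ (∇ β) x) :
    vectorDiv (fun y => ψ (β y) • ∇ β y) x = d * ‖∇ β x‖ ^ 2 + ψ (β x) * laplacian β x := by
  have hψβ : HasGradientAt (fun y => ψ (β y)) (d • ∇ β x) x :=
    hψ.comp_hasGradientAt hβ.hasGradientAt
  rw [vectorDiv_smul hψβ.differentiableAt hβ', hψβ.gradient, real_inner_smul_left,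
    real_inner_self_eq_norm_sq, laplacian]

theorem pLaplacian_comp_of_norm_gradient_eq_one {φ φ' : ℝ → ℝ} {β : E → ℝ} (p : ℝ)
    (hφ : ∀ t, HasDerivAt φ (φ' t) t) (hφ' : ∀ t, 0 < φ' t)
    (hβ : Differentiable ℝ β) (hβgrad : ∀ x, ‖∇ β x‖ = 1) :
    pLaplacian p (fun y => φ (β y)) = vectorDiv (fun y => φ' (β y) ^ (p - 1) • ∇ β y) := by
  have hgrad (y : E) : ∇ (fun z => φ (β z)) y = φ' (β y) • ∇ β y :=
    ((hφ _).comp_hasGradientAt (hβ y).hasGradientAt).gradient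
  have hflux (y : E) : ‖∇ (fun z => φ (β z)) y‖ ^ (p - 2) • ∇ (fun z => φ (β z)) y
      = φ' (β y) ^ (p - 1) • ∇ β y := by
    have hpos := hφ' (β y)
    rw [hgrad, norm_smul, hβgrad, mul_one, Real.norm_of_nonneg hpos.le, smul_smul,
      ← Real.rpow_add_one hpos.ne']
    ring_nf
  simp only [pLaplacian, hflux]

end Divergence

theorem pLaplacian_exp_ge
    {E : Type*} [NormedAddCommGroup E] [InnerProductSpace ℝ E] [FiniteDimensional ℝ E]
    (p a b : ℝ) (hp : 2 ≤ p) (ha : 0 < a) (hb : b = a / p)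
    (β : E → ℝ) (hβ : ContDiff ℝ 2 β) (hβgrad : ∀ x, ‖gradient β x‖ = 1)
    (hβlap : ∀ x, -a ≤ laplacian β x) (x : E) :
    pLaplacian p (fun y => Real.exp (b * β y)) x
      ≥ -b ^ p * Real.exp (b * β x) ^ (p - 1) := by
  have hb0 : 0 < b := hb ▸ div_pos ha (by linarith)
  have hβd : Differentiable ℝ β := hβ.differentiable two_ne_zero
  have hβ'd : Differentiable ℝ (∇ β) := (hβ.gradient (n := 1)).differentiable one_ne_zero
  set ψ : ℝ → ℝ := fun t => b ^ (p - 1) * exp ((p - 1) * b * t) with hψ_def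
  have hψ (t : ℝ) : HasDerivAt ψ ((p - 1) * b * ψ t) t :=
    (((hasDerivAt_id t).const_mul ((p - 1) * b)).exp.const_mul (b ^ (p - 1))).congr_deriv
      (by simp only [ψ, id]; ring)
  have hflux : pLaplacian p (fun y => exp (b * β y)) = vectorDiv (fun y => ψ (β y) • ∇ β y) := by
    have hexp (t : ℝ) : HasDerivAt (fun s => exp (b * s)) (b * exp (b * t)) t := by
      simpa [mul_comm] using ((hasDerivAt_id t).const_mul b).exp
    rw [pLaplacian_comp_of_norm_gradient_eq_one p hexp (fun t => by positivity) hβd hβgrad]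
    congr! 3 with y
    rw [mul_rpow hb0.le (exp_pos _).le, ← exp_mul, hψ_def]
    ring_nf
  have hbψ : b * ψ (β x) = b ^ p * exp (b * β x) ^ (p - 1) := by
    rw [hψ_def, ← exp_mul, ← mul_assoc, ← rpow_one_add' hb0.le (by linarith)]
    ring_nf
  obtain rfl : a = p * b := by rw [hb]; field_simp
  have hΔ : ψ (β x) * -(p * b) ≤ ψ (β x) * laplacian β x :=
    mul_le_mul_of_nonneg_left (hβlap x) (by positivity)
  rw [hflux, vectorDiv_comp_smul_gradient (hψ _) (hβd x) (hβ'd x), hβgrad x, neg_mul, ← hbψ]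
  linarith
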